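/- arXiv:2512.21016 — 6 statements merged into one kernel-verified Lean document; each statement's English description precedes it below -/
import Mathlib

section
/- Let n, d be natural numbers and let Q be an n×n real matrix with Qᵀ * Q = 1 (i.e. Q is orthogonal). For a polynomial f ∈ ℝ[x₁,…,xₙ], let f∘Q denote the polynomial obtained by substituting xᵢ ↦ ∑ⱼ Q i j • xⱼ (so that (f∘Q)(a) = f(Q·a) for every point a). Then for all polynomials f, g that are homogeneous of degree d, the Bombieri–Weyl product is invariant: ⟨f∘Q, g∘Q⟩_BW = ⟨f,g⟩_BW. -/
open MvPolynomial

/-- The Bombieri–Weyl product of two polynomials `f, g`: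
`⟨f,g⟩_BW = ∑_{|α|=d} coeff_α(f)·coeff_α(g) / (d choose α)`.
Summing over `f.support ∪ g.support` is the same as summing over all `α` with
`|α| = d` when `f` and `g` are homogeneous of degree `d`, since all other terms vanish. -/
noncomputable def bwProduct {n : ℕ} (f g : MvPolynomial (Fin n) ℝ) : ℝ :=
  ∑ α ∈ f.support ∪ g.support,
    f.coeff α * g.coeff α / (Nat.multinomial Finset.univ α : ℝ)

/-- The substitution `f ∘ Q`, given by `xᵢ ↦ ∑ⱼ Q i j • xⱼ`. -/
noncomputable def compMatrix {n : ℕ} (Q : Matrix (Fin n) (Fin n) ℝ)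
    (f : MvPolynomial (Fin n) ℝ) : MvPolynomial (Fin n) ℝ :=
  MvPolynomial.aeval (fun i => ∑ j, Q i j • (X j : MvPolynomial (Fin n) ℝ)) f

namespace BW
open Finset

variable {n d : ℕ}

noncomputable def cnt (w : Fin d → Fin n) : Fin n →₀ ℕ := ∑ k, Finsupp.single (w k) 1

lemma cnt_apply (w : Fin d → Fin n) (i : Fin n) :
    cnt w i = (univ.filter fun k => w k = i).card := by
  classical
  simp [cnt, Finsupp.finset_sum_apply, Finsupp.single_apply]

lemma sum_cnt (w : Fin d → Fin n) : ∑ i, cnt w i = d := by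
  classical
  have : ∀ i, cnt w i = ∑ k : Fin d, if w k = i then 1 else 0 := by
    intro i; simp [cnt, Finsupp.finset_sum_apply, Finsupp.single_apply]
  simp_rw [this]
  rw [Finset.sum_comm]
  simp

lemma degree_eq_sum (α : Fin n →₀ ℕ) : α.degree = ∑ i, α i :=
  Finset.sum_subset (subset_univ _) (by simp +contextual [Finsupp.notMem_support_iff])

lemma degree_cnt (w : Fin d → Fin n) : (cnt w).degree = d := by
  rw [degree_eq_sum, sum_cnt]

lemma prod_X (w : Fin d → Fin n) :
    (∏ k, (X (w k) : MvPolynomial (Fin n) ℝ)) = monomial (cnt w) 1 := by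
  rw [cnt, monomial_sum_one]
  simp [X]

/-- the function-to-finsupp conversion -/
lemma prod_X_pow (k : Fin n → ℕ) :
    (∏ i, (X i : MvPolynomial (Fin n) ℝ) ^ k i) =
      monomial (Finsupp.equivFunOnFinite.symm k) 1 := by
  classical
  rw [← prod_X_pow_eq_monomial]
  refine (Finset.prod_subset (subset_univ _) ?_).symm
  intro i _ hi
  have : k i = 0 := by simpa [Finsupp.notMem_support_iff] using hi
  simp [this]

/-- counting lemma via the multinomial theorem -/
lemma card_fiber (α : Fin n →₀ ℕ) :
    ((univ.filter fun w : Fin d → Fin n => cnt w = α).card : ℝ) =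
      if ∑ i, α i = d then (Nat.multinomial univ α : ℝ) else 0 := by
  classical
  have h1 : ((∑ i, X i : MvPolynomial (Fin n) ℝ)) ^ d
      = ∑ w : Fin d → Fin n, monomial (cnt w) 1 := by
    have : ((∑ i, X i : MvPolynomial (Fin n) ℝ)) ^ d
        = ∏ _k : Fin d, (∑ i, X i : MvPolynomial (Fin n) ℝ) := by
      simp
    rw [this, Finset.prod_univ_sum]
    refine Finset.sum_congr ?_ fun w _ => prod_X w
    · ext w; simp [Fintype.mem_piFinset]
  have h2 := Finset.sum_pow_eq_sum_piAntidiag (univ : Finset (Fin n))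
      (fun i => (X i : MvPolynomial (Fin n) ℝ)) d
  have := congrArg (coeff α) (h1.symm.trans h2)
  rw [coeff_sum, coeff_sum] at this
  simp only [prod_X_pow, coeff_monomial] at this
  rw [Finset.sum_boole] at this
  rw [this]
  have key : ∀ k ∈ univ.piAntidiag d,
      coeff α ((Nat.multinomial univ k : MvPolynomial (Fin n) ℝ)
        * monomial (Finsupp.equivFunOnFinite.symm k) 1)
      = if k = ⇑α then (Nat.multinomial univ ⇑α : ℝ) else 0 := by
    intro k hk
    rw [← C_eq_coe_nat, coeff_C_mul, coeff_monomial]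
    have h3 : Finsupp.equivFunOnFinite.symm k = α ↔ k = ⇑α := Equiv.symm_apply_eq _
    rw [if_congr h3 rfl rfl, mul_ite, mul_one, mul_zero]
    by_cases h : k = ⇑α
    · simp [h]
    · simp [h]
  rw [Finset.sum_congr rfl key, Finset.sum_ite_eq' (univ.piAntidiag d) (⇑α)]
  simp [Finset.mem_piAntidiag]

noncomputable def tens (d : ℕ) (f : MvPolynomial (Fin n) ℝ) (w : Fin d → Fin n) : ℝ :=
  f.coeff (cnt w) / (Nat.multinomial univ (cnt w) : ℝ)

lemma mult_pos (α : Fin n →₀ ℕ) : (0:ℝ) < (Nat.multinomial univ ⇑α : ℝ) := by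
  exact_mod_cast Nat.multinomial_pos _ _

lemma rep {f : MvPolynomial (Fin n) ℝ} (hf : f.IsHomogeneous d) :
    f = ∑ w : Fin d → Fin n, tens d f w • monomial (cnt w) 1 := by
  classical
  ext β
  rw [coeff_sum]
  simp only [coeff_smul, coeff_monomial, smul_eq_mul, mul_ite, mul_one, mul_zero]
  rw [Finset.sum_congr rfl (fun w _ => show (if cnt w = β then tens d f w else 0)
      = if cnt w = β then f.coeff β / (Nat.multinomial univ ⇑β : ℝ) else 0 by
    split
    · next h => rw [tens, h]
    · rfl)]
  rw [← Finset.sum_filter, Finset.sum_const, nsmul_eq_mul]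
  by_cases h : ∑ i, β i = d
  · have hc : ((univ.filter fun w : Fin d → Fin n => cnt w = β).card : ℝ)
        = (Nat.multinomial univ ⇑β : ℝ) := by rw [card_fiber]; simp [h]
    rw [hc, mul_div_cancel₀]
    exact (mult_pos β).ne'
  · have hc : ((univ.filter fun w : Fin d → Fin n => cnt w = β).card : ℝ) = 0 := by
      rw [card_fiber]; simp [h]
    rw [hc, zero_mul, hf.coeff_eq_zero]
    rw [degree_eq_sum]; exact h


lemma cnt_comp_perm (w : Fin d → Fin n) (τ : Equiv.Perm (Fin d)) :
    cnt (w ∘ τ) = cnt w := by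
  rw [cnt, cnt]
  exact Equiv.sum_comp τ (fun k => Finsupp.single (w k) 1)

lemma tens_comp_perm (f : MvPolynomial (Fin n) ℝ) (w : Fin d → Fin n)
    (τ : Equiv.Perm (Fin d)) : tens d f (w ∘ τ) = tens d f w := by
  rw [tens, tens, cnt_comp_perm]

lemma exists_perm {u v : Fin d → Fin n} (h : cnt u = cnt v) :
    ∃ σ : Equiv.Perm (Fin d), v ∘ σ = u := by
  classical
  have hc : ∀ i, Fintype.card {k // u k = i} = Fintype.card {k // v k = i} := by
    intro i
    rw [Fintype.card_subtype, Fintype.card_subtype, ← cnt_apply, ← cnt_apply, h]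
  refine ⟨Equiv.ofFiberEquiv (f := u) (g := v)
    (fun i => Fintype.equivOfCardEq (hc i)), ?_⟩
  funext a
  exact Equiv.ofFiberEquiv_map _ a

noncomputable def phi (d : ℕ) (Q : Matrix (Fin n) (Fin n) ℝ)
    (f : MvPolynomial (Fin n) ℝ) (v : Fin d → Fin n) : ℝ :=
  ∑ w : Fin d → Fin n, tens d f w * ∏ k, Q (w k) (v k)

lemma phi_symm (Q : Matrix (Fin n) (Fin n) ℝ) (f : MvPolynomial (Fin n) ℝ)
    {u v : Fin d → Fin n} (h : cnt u = cnt v) : phi d Q f u = phi d Q f v := by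
  obtain ⟨σ, hσ⟩ := exists_perm h
  rw [phi, phi]
  refine Fintype.sum_equiv (Equiv.arrowCongr σ (Equiv.refl (Fin n))) _ _ fun w => ?_
  have h1 : (Equiv.arrowCongr σ (Equiv.refl (Fin n))) w = w ∘ σ.symm := rfl
  rw [h1, tens_comp_perm]
  congr 1
  have h2 : ∀ k, (w ∘ σ.symm) (σ k) = w k := by intro k; simp
  calc ∏ k, Q (w k) (u k) = ∏ k, Q ((w ∘ σ.symm) (σ k)) (v (σ k)) := by
        refine Finset.prod_congr rfl fun k _ => ?_
        rw [h2, ← hσ]; rfl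
    _ = ∏ k, Q ((w ∘ σ.symm) k) (v k) :=
        Equiv.prod_comp σ fun k => Q ((w ∘ σ.symm) k) (v k)

lemma comp_rep (Q : Matrix (Fin n) (Fin n) ℝ) {f : MvPolynomial (Fin n) ℝ}
    (hf : f.IsHomogeneous d) :
    compMatrix Q f = ∑ v : Fin d → Fin n, phi d Q f v • monomial (cnt v) 1 := by
  classical
  conv_lhs => rw [compMatrix, rep hf]
  rw [map_sum]
  have step : ∀ w : Fin d → Fin n,
      (aeval fun i => ∑ j, Q i j • (X j : MvPolynomial (Fin n) ℝ))
        (tens d f w • monomial (cnt w) (1:ℝ))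
      = ∑ v : Fin d → Fin n,
          (tens d f w * ∏ k, Q (w k) (v k)) • monomial (cnt v) (1:ℝ) := by
    intro w
    rw [map_smul, ← prod_X w, map_prod]
    simp only [aeval_X]
    rw [Finset.prod_univ_sum, Fintype.piFinset_univ]
    have : ∀ v : Fin d → Fin n,
        (∏ k, Q (w k) (v k) • (X (v k) : MvPolynomial (Fin n) ℝ))
          = (∏ k, Q (w k) (v k)) • monomial (cnt v) 1 := by
      intro v
      rw [← prod_X v]
      simp only [MvPolynomial.smul_eq_C_mul]
      rw [Finset.prod_mul_distrib, ← map_prod]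
    rw [Finset.sum_congr rfl fun v _ => this v, Finset.smul_sum]
    refine Finset.sum_congr rfl fun v _ => ?_
    rw [smul_smul]
  rw [Finset.sum_congr rfl fun w _ => step w, Finset.sum_comm]
  refine Finset.sum_congr rfl fun v _ => ?_
  rw [← Finset.sum_smul]
  rfl

lemma comp_isHomogeneous (Q : Matrix (Fin n) (Fin n) ℝ) {f : MvPolynomial (Fin n) ℝ}
    (hf : f.IsHomogeneous d) : (compMatrix Q f).IsHomogeneous d := by
  rw [comp_rep Q hf]
  refine IsHomogeneous.sum _ _ _ fun v _ => ?_
  rw [smul_monomial]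
  exact isHomogeneous_monomial _ (degree_cnt v)

lemma tens_comp (Q : Matrix (Fin n) (Fin n) ℝ) {f : MvPolynomial (Fin n) ℝ}
    (hf : f.IsHomogeneous d) (u : Fin d → Fin n) :
    tens d (compMatrix Q f) u = phi d Q f u := by
  classical
  rw [tens, comp_rep Q hf, coeff_sum]
  simp only [coeff_smul, coeff_monomial, smul_eq_mul, mul_ite, mul_one, mul_zero]
  rw [Finset.sum_congr rfl (fun v _ => show (if cnt v = cnt u then phi d Q f v else 0)
      = if cnt v = cnt u then phi d Q f u else 0 by
    split
    · next h => rw [phi_symm Q f h.symm]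
    · rfl)]
  rw [← Finset.sum_filter, Finset.sum_const, nsmul_eq_mul]
  have hc : ((univ.filter fun v : Fin d → Fin n => cnt v = cnt u).card : ℝ)
      = (Nat.multinomial univ ⇑(cnt u) : ℝ) := by rw [card_fiber]; simp [sum_cnt]
  rw [hc, mul_div_assoc, mul_comm, div_mul_cancel₀ _ (mult_pos (cnt u)).ne']

lemma bw_eq_tens {f g : MvPolynomial (Fin n) ℝ}
    (hf : f.IsHomogeneous d) (hg : g.IsHomogeneous d) :
    bwProduct f g = ∑ w : Fin d → Fin n, tens d f w * tens d g w := by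
  classical
  have himg : f.support ∪ g.support ⊆ (univ : Finset (Fin d → Fin n)).image cnt := by
    intro β hβ
    have hdeg : ∑ i, β i = d := by
      rw [← degree_eq_sum, Finsupp.degree_eq_weight_one]
      rcases Finset.mem_union.mp hβ with h | h
      · exact hf (by rwa [MvPolynomial.mem_support_iff] at h)
      · exact hg (by rwa [MvPolynomial.mem_support_iff] at h)
    have : ((univ.filter fun w : Fin d → Fin n => cnt w = β).card : ℝ)
        = (Nat.multinomial univ ⇑β : ℝ) := by rw [card_fiber]; simp [hdeg]
    have hpos : 0 < (univ.filter fun w : Fin d → Fin n => cnt w = β).card := by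
      have : (0:ℝ) < ((univ.filter fun w : Fin d → Fin n => cnt w = β).card : ℝ) :=
        this ▸ mult_pos β
      exact_mod_cast this
    obtain ⟨w, hw⟩ := Finset.card_pos.mp hpos
    rw [Finset.mem_filter] at hw
    exact Finset.mem_image.mpr ⟨w, Finset.mem_univ w, hw.2⟩
  rw [bwProduct]
  rw [Finset.sum_subset himg (fun β hβi hβ => by
    rcases Finset.notMem_union.mp hβ with ⟨h1, h2⟩
    rw [MvPolynomial.notMem_support_iff] at h1
    rw [h1, zero_mul, zero_div])]
  have hR : ∑ w : Fin d → Fin n, tens d f w * tens d g w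
      = ∑ β ∈ (univ : Finset (Fin d → Fin n)).image cnt,
          ((univ.filter fun w : Fin d → Fin n => cnt w = β).card)
            • (f.coeff β * g.coeff β / ((Nat.multinomial univ ⇑β : ℝ))^2) := by
    rw [← Finset.sum_comp (fun β : Fin n →₀ ℕ =>
      f.coeff β * g.coeff β / ((Nat.multinomial univ ⇑β : ℝ))^2) cnt]
    refine Finset.sum_congr rfl fun w _ => ?_
    rw [tens, tens, div_mul_div_comm, ← sq]
  rw [hR]
  refine Finset.sum_congr rfl fun β hβ => ?_
  obtain ⟨w, _, hw⟩ := Finset.mem_image.mp hβ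
  have hdeg : ∑ i, β i = d := by rw [← hw]; exact sum_cnt w
  have hc : ((univ.filter fun w : Fin d → Fin n => cnt w = β).card : ℝ)
      = (Nat.multinomial univ ⇑β : ℝ) := by rw [card_fiber]; simp [hdeg]
  rw [nsmul_eq_mul, hc]
  have hm : (Nat.multinomial univ ⇑β : ℝ) ≠ 0 := (mult_pos β).ne'
  field_simp


lemma sum_prod_eval (h : Fin d → Fin n → ℝ) :
    ∑ u : Fin d → Fin n, ∏ k, h k (u k) = ∏ k, ∑ j, h k j := by
  rw [Finset.prod_univ_sum, Fintype.piFinset_univ]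

lemma sum_phi_mul_phi {Q : Matrix (Fin n) (Fin n) ℝ} (hQ : Q.transpose * Q = 1)
    (f g : MvPolynomial (Fin n) ℝ) :
    ∑ u : Fin d → Fin n, phi d Q f u * phi d Q g u
      = ∑ w : Fin d → Fin n, tens d f w * tens d g w := by
  classical
  have hQ' : Q * Q.transpose = 1 := mul_eq_one_comm.mp hQ
  have entry : ∀ a b : Fin n, ∑ j, Q a j * Q b j = if a = b then (1:ℝ) else 0 := by
    intro a b
    have : (Q * Q.transpose) a b = (1 : Matrix (Fin n) (Fin n) ℝ) a b := by rw [hQ']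
    rw [Matrix.mul_apply] at this
    simp only [Matrix.transpose_apply] at this
    rw [this, Matrix.one_apply]
  simp only [phi, Finset.sum_mul_sum]
  rw [Finset.sum_comm]
  have inner : ∀ w w' : Fin d → Fin n,
      ∑ u : Fin d → Fin n, (tens d f w * ∏ k, Q (w k) (u k))
        * (tens d g w' * ∏ k, Q (w' k) (u k))
      = tens d f w * tens d g w' * (if w = w' then 1 else 0) := by
    intro w w'
    have : ∀ u : Fin d → Fin n,
        (tens d f w * ∏ k, Q (w k) (u k)) * (tens d g w' * ∏ k, Q (w' k) (u k))
        = tens d f w * tens d g w' * ∏ k, (Q (w k) (u k) * Q (w' k) (u k)) := by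
      intro u
      rw [Finset.prod_mul_distrib]
      ring
    rw [Finset.sum_congr rfl fun u _ => this u, ← Finset.mul_sum,
      sum_prod_eval fun k j => Q (w k) j * Q (w' k) j]
    congr 1
    simp only [entry]
    by_cases h : w = w'
    · simp [h]
    · have : ∃ k, w k ≠ w' k := by
        by_contra hk
        push_neg at hk
        exact h (funext hk)
      obtain ⟨k, hk⟩ := this
      rw [if_neg h]
      exact Finset.prod_eq_zero (Finset.mem_univ k) (by simp [hk])
  rw [Finset.sum_congr rfl fun w _ => Finset.sum_comm]
  rw [Finset.sum_congr rfl fun w _ => Finset.sum_congr rfl fun w' _ => inner w w']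
  simp [mul_ite, mul_one, mul_zero, Finset.sum_ite_eq]

end BW

/-- For an orthogonal matrix `Q` (i.e. `Qᵀ * Q = 1`), the Bombieri–Weyl
product of polynomials homogeneous of degree `d` is invariant under the substitution
`xᵢ ↦ ∑ⱼ Q i j • xⱼ`. -/
theorem bwProduct_comp_orthogonal (n d : ℕ) (Q : Matrix (Fin n) (Fin n) ℝ)
    (hQ : Q.transpose * Q = 1)
    (f g : MvPolynomial (Fin n) ℝ)
    (hf : f.IsHomogeneous d) (hg : g.IsHomogeneous d) :
    bwProduct (compMatrix Q f) (compMatrix Q g) = bwProduct f g := by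
  rw [BW.bw_eq_tens (BW.comp_isHomogeneous Q hf) (BW.comp_isHomogeneous Q hg),
    BW.bw_eq_tens hf hg,
    Finset.sum_congr rfl fun u _ => by
      rw [BW.tens_comp Q hf, BW.tens_comp Q hg]]
  exact BW.sum_phi_mul_phi hQ f g
end

section
/- Let n, d be natural numbers. The ℂ-linear span of the set of d-th powers of linear forms, {(∑ᵢ vᵢ • Xᵢ)^d : v ∈ ℂⁿ}, inside MvPolynomial (Fin n) ℂ equals the submodule of all polynomials that are homogeneous of degree d. -/
/-!
Polarization: for `y : ι → A` with `#ι = m`, inclusion–exclusion over the subsets `S ⊆ ι` gives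
`∑_S (-1)^(m - #S) (∑_{j ∈ S} y j)^m = m! ∏_j y j`, since after expanding the powers only the
surjective, i.e. bijective, assignments of factors survive. Over a field of characteristic zero
every product of `m` linear forms, in particular every monomial of degree `m`, is therefore a
linear combination of `m`-th powers of linear forms.
-/

open Finset

namespace Finset

variable {ι : Type*} [Fintype ι] [DecidableEq ι]

theorem sum_superset_neg_one_pow_card_compl (T : Finset ι) :
    ∑ S with T ⊆ S, (-1 : ℤ) ^ #Sᶜ = if T = univ then 1 else 0 := by
  have : ∑ S with T ⊆ S, (-1 : ℤ) ^ #Sᶜ = ∑ U ∈ Tᶜ.powerset, (-1 : ℤ) ^ #U :=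
    sum_nbij' compl compl (by simp) (by simp [subset_compl_comm]) (by simp) (by simp) (by simp)
  simp only [this, sum_powerset_neg_one_pow_card, compl_eq_empty_iff]

theorem sum_surjective_eq_sum_perm {M : Type*} [AddCommMonoid M] (f : (ι → ι) → M) :
    ∑ g : ι → ι with g.Surjective, f g = ∑ σ : Equiv.Perm ι, f σ := by
  refine (sum_nbij' (fun σ : Equiv.Perm ι => (σ : ι → ι)) (fun g => if h : g.Surjective then
    Equiv.ofBijective g h.bijective_of_finite else 1) ?_ ?_ ?_ ?_ ?_).symm
  · intro σ _; simpa using σ.surjective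
  · simp
  · intro σ _; simp [σ.surjective]
  · intro g hg; simp_all
  · simp

theorem sum_pow_eq_sum_image_subset {R : Type*} [CommSemiring R] (S : Finset ι) (y : ι → R) :
    (∑ j ∈ S, y j) ^ Fintype.card ι = ∑ g : ι → ι with univ.image g ⊆ S, ∏ k, y (g k) := by
  rw [← card_univ, ← prod_const, prod_univ_sum]
  congr 1
  ext g
  simp [image_subset_iff]

theorem sum_neg_one_pow_card_compl_smul_sum_pow {R : Type*} [CommRing R] (y : ι → R) :
    ∑ S : Finset ι, (-1 : ℤ) ^ #Sᶜ • (∑ j ∈ S, y j) ^ Fintype.card ι =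
      (Fintype.card ι).factorial • ∏ j, y j := calc
  _ = ∑ S : Finset ι, ∑ g : ι → ι,
        if univ.image g ⊆ S then (-1 : ℤ) ^ #Sᶜ • ∏ k, y (g k) else 0 := by
    simp_rw [sum_pow_eq_sum_image_subset, smul_sum, sum_filter]
  _ = ∑ g : ι → ι, (∑ S with univ.image g ⊆ S, (-1 : ℤ) ^ #Sᶜ) • ∏ k, y (g k) := by
    rw [sum_comm]; simp_rw [sum_smul, sum_filter]
  _ = ∑ g : ι → ι with g.Surjective, ∏ k, y (g k) := by
    simp_rw [sum_superset_neg_one_pow_card_compl, sum_filter, ite_smul, one_smul, zero_smul]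
    refine sum_congr rfl fun g _ => ?_
    exact if_congr (by simp [eq_univ_iff_forall, Function.Surjective]) rfl rfl
  _ = ∑ σ : Equiv.Perm ι, ∏ k, y (σ k) := sum_surjective_eq_sum_perm _
  _ = (Fintype.card ι).factorial • ∏ j, y j := by
    simp [Equiv.prod_comp, Fintype.card_perm]

end Finset

namespace Submodule

variable {K A : Type*} [Field K] [CharZero K] [CommRing A] [Algebra K A]

theorem prod_mem_span_image_pow {L : Submodule K A} {ι : Type*} [Fintype ι] {y : ι → A}
    (hy : ∀ j, y j ∈ L) : ∏ j, y j ∈ span K ((· ^ Fintype.card ι) '' L) := by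
  classical
  have hfac : (Fintype.card ι).factorial • ∏ j, y j ∈ span K ((· ^ Fintype.card ι) '' L) := by
    rw [← sum_neg_one_pow_card_compl_smul_sum_pow]
    exact sum_mem fun S _ =>
      zsmul_mem (subset_span (Set.mem_image_of_mem _ (sum_mem fun j _ => hy j))) _
  have hfac_ne : ((Fintype.card ι).factorial : K) ≠ 0 :=
    Nat.cast_ne_zero.mpr (Nat.factorial_ne_zero _)
  simpa [← Nat.cast_smul_eq_nsmul K, smul_smul, hfac_ne] using
    smul_mem _ ((Fintype.card ι).factorial : K)⁻¹ hfac

end Submodule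

namespace MvPolynomial

variable {σ R : Type*}

theorem monomial_one_eq_prod_sigma [CommSemiring R] (α : σ →₀ ℕ) :
    monomial α (1 : R) = ∏ x : Σ i : α.support, Fin (α i), X (x.1 : σ) := by
  rw [Fintype.prod_sigma, ← prod_X_pow_eq_monomial, ← prod_coe_sort]
  simp

theorem card_sigma_fin_support (α : σ →₀ ℕ) :
    Fintype.card (Σ i : α.support, Fin (α i)) = α.degree := by
  simp [Fintype.card_sigma, Finsupp.degree_apply, sum_attach]

variable (σ)
variable {K : Type*} [Field K] [CharZero K]

theorem span_image_pow_homogeneousSubmodule_one (d : ℕ) :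
    Submodule.span K ((· ^ d) '' homogeneousSubmodule σ K 1) = homogeneousSubmodule σ K d := by
  apply le_antisymm
  · rw [Submodule.span_le]
    rintro _ ⟨ℓ, hℓ, rfl⟩
    simpa using (mem_homogeneousSubmodule 1 ℓ).mp hℓ |>.pow d
  · rw [homogeneousSubmodule_eq_finsupp_supported, AddMonoidAlgebra.supported_eq_span_single,
      Submodule.span_le]
    rintro _ ⟨α, rfl : α.degree = d, rfl⟩
    dsimp only
    rw [single_eq_monomial, monomial_one_eq_prod_sigma, ← card_sigma_fin_support]
    exact Submodule.prod_mem_span_image_pow fun x => isHomogeneous_X K _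

end MvPolynomial

open MvPolynomial

/-- The ℂ-linear span of the `d`-th powers of linear forms
`{(∑ᵢ vᵢ • Xᵢ)^d : v ∈ ℂⁿ}` inside `MvPolynomial (Fin n) ℂ` is the submodule of
polynomials homogeneous of degree `d` (non-degeneracy of the Veronese embedding). -/
theorem span_pow_linear_forms_eq_homogeneousSubmodule (n d : ℕ) :
    Submodule.span ℂ
      {p : MvPolynomial (Fin n) ℂ |
        ∃ v : Fin n → ℂ, p = (∑ i, v i • (X i : MvPolynomial (Fin n) ℂ)) ^ d} =
      MvPolynomial.homogeneousSubmodule (Fin n) ℂ d := by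
  have linear_forms : {p : MvPolynomial (Fin n) ℂ | ∃ v : Fin n → ℂ, p = (∑ i, v i • X i) ^ d} =
      (· ^ d) '' homogeneousSubmodule (Fin n) ℂ 1 := by
    ext p
    simp [homogeneousSubmodule_one_eq_span_X, Submodule.mem_span_range_iff_exists_fun, eq_comm]
  rw [linear_forms, span_image_pow_homogeneousSubmodule_one]
end

section
/- Let n ≥ 3 and let A, B be symmetric n×n complex matrices (Aᵀ = A, Bᵀ = B) with rank A = 2. Let ε denote the nilpotent generator of the dual numbers ℂ[ε]/(ε²), and let M = A' + ε•B' be the matrix over the dual numbers obtained by mapping A and B entrywise into ℂ[ε]/(ε²). Then all 3×3 minors of M vanish (i.e. det(M.submatrix f g) = 0 for all maps f, g : Fin 3 → Fin n) if and only if B maps the kernel of A into the image of A, i.e. for every v ∈ ℂⁿ with A·v = 0 there exists w ∈ ℂⁿ with B·v = A·w. -/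
/-!
If `B = A X + Y A`, then `A + εB = (1 + εY) A (1 + εX)` because `ε² = 0`, and by the multilinear
expansion behind Cauchy–Binet the `(rank A + 1)`-minors of this product vanish with those of `A`.
A generalized inverse `G` (`A G A = A`) produces `X` and `Y` as soon as `B` maps `ker A` into
`im A`. Conversely, if `A v = 0` but `B v ∉ im A`, take `u₁, …, u_r` with `A uᵢ` a basis of `im A`.
The matrix `(A + εB) [v u₁ … u_r]` has first column `ε B v`, so its minors are `ε` times minors of
`[B v, A u₁, …, A u_r]`, whose columns are independent, and one of them is nonzero.
-/

open Matrix TrivSqZeroExt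
open scoped DualNumber

namespace Matrix

section Minors

variable {R : Type*} [CommRing R] {l m n o : Type*}

def MinorsVanish (ι : Type*) [Fintype ι] [DecidableEq ι] (A : Matrix m n R) : Prop :=
  ∀ (f : ι → m) (g : ι → n), (A.submatrix f g).det = 0

variable {ι : Type*} [Fintype ι] [DecidableEq ι]

theorem det_submatrix_mul_eq_zero_of_right [Fintype m] (P : Matrix l m R) {N : Matrix m o R}
    {g : ι → o} (h : ∀ k : ι → m, (N.submatrix k g).det = 0) (f : ι → l) :
    ((P * N).submatrix f g).det = 0 :=
  calc ((P * N).submatrix f g).det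
      = detRowAlternating fun i => ∑ k, P (f i) k • (N.submatrix id g) k := by
        congr 1; ext i j; simp [mul_apply]
    _ = ∑ k : ι → m, detRowAlternating fun i => P (f i) (k i) • (N.submatrix id g) (k i) :=
        (detRowAlternating : (ι → R) [⋀^ι]→ₗ[R] R).toMultilinearMap.map_sum _
    _ = 0 := Finset.sum_eq_zero fun k _ =>
        (detRowAlternating.toMultilinearMap.map_smul_univ _ _).trans
          (smul_eq_zero_of_right _ (h k))

theorem det_submatrix_mul_eq_zero_of_left [Fintype m] {P : Matrix l m R} (N : Matrix m o R)
    {f : ι → l} (h : ∀ k : ι → m, (P.submatrix f k).det = 0) (g : ι → o) :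
    ((P * N).submatrix f g).det = 0 := by
  rw [← det_transpose, transpose_submatrix, transpose_mul]
  exact det_submatrix_mul_eq_zero_of_right _
    (fun k => by rw [← transpose_submatrix, det_transpose, h]) g

theorem MinorsVanish.mul_left [Fintype m] {N : Matrix m o R} (h : N.MinorsVanish ι)
    (P : Matrix l m R) : (P * N).MinorsVanish ι :=
  fun f g => det_submatrix_mul_eq_zero_of_right P (fun k => h k g) f

theorem MinorsVanish.mul_right [Fintype m] {P : Matrix l m R} (h : P.MinorsVanish ι)
    (N : Matrix m o R) : (P * N).MinorsVanish ι :=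
  fun f g => det_submatrix_mul_eq_zero_of_left N (h f) g

theorem MinorsVanish.map {S : Type*} [CommRing S] {A : Matrix m n R} (h : A.MinorsVanish ι)
    (φ : R →+* S) : (A.map φ).MinorsVanish ι := fun f g => by
  rw [submatrix_map, ← RingHom.mapMatrix_apply, ← RingHom.map_det, h, map_zero]

end Minors

section Field

variable {K : Type*} [Field K] {ι m n : Type*}

theorem minorsVanish_of_rank_lt [Fintype ι] [DecidableEq ι] [Fintype n] {A : Matrix m n K}
    (h : A.rank < Fintype.card ι) : A.MinorsVanish ι := fun f g => by
  by_contra hdet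
  have := rank_of_det_ne_zero hdet ▸ rank_submatrix_le A f g
  omega

theorem exists_det_submatrix_ne_zero [Fintype ι] [DecidableEq ι] [Fintype m] {U : Matrix m ι K}
    (hU : LinearIndependent K U.col) : ∃ f : ι → m, (U.submatrix f id).det ≠ 0 := by
  have hrank : U.rank = Fintype.card ι := by rw [← rank_transpose]; exact hU.rank_matrix
  have hsurj : Function.Surjective U.vecMul := by
    refine LinearMap.range_eq_top.mp
      (Submodule.eq_top_of_finrank_eq (S := LinearMap.range U.vecMulLinear) ?_)
    rw [range_vecMulLinear, ← rank_eq_finrank_span_row, hrank, Module.finrank_fintype_fun_eq_card]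
  obtain ⟨L, hL⟩ := vecMul_surjective_iff_exists_left_inverse.mp hsurj
  by_contra! h
  have := det_submatrix_mul_eq_zero_of_right L h id
  rw [hL, submatrix_id_id, det_one] at this
  exact one_ne_zero this

theorem exists_linearIndependent_mulVec [Fintype n] (A : Matrix m n K) :
    ∃ u : Fin A.rank → n → K, LinearIndependent K (fun k => A *ᵥ u k) ∧
      Submodule.span K (Set.range fun k => A *ᵥ u k) = LinearMap.range A.mulVecLin := by
  let b : Module.Basis (Fin A.rank) K (LinearMap.range A.mulVecLin) := Module.finBasis K _
  choose u hu using fun k => (b k).2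
  have hAu : (fun k => A *ᵥ u k) = (LinearMap.range A.mulVecLin).subtype ∘ b := funext hu
  refine ⟨u, hAu ▸ b.linearIndependent.map' _ (Submodule.ker_subtype _), ?_⟩
  rw [hAu, Set.range_comp, ← Submodule.map_span, b.span_eq, Submodule.map_top,
    Submodule.range_subtype]

variable [Fintype m] [Fintype n] [DecidableEq m] [DecidableEq n]

theorem exists_mul_mul_self_eq (A : Matrix m n K) : ∃ G : Matrix n m K, A * G * A = A := by
  let a := toLin' A
  obtain ⟨s, hs⟩ := a.rangeRestrict.exists_rightInverse_of_surjective a.range_rangeRestrict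
  obtain ⟨q, hq⟩ := (LinearMap.range a).subtype.exists_leftInverse_of_injective
    (LinearMap.range a).ker_subtype
  refine ⟨LinearMap.toMatrix' (s ∘ₗ q), toLin'.injective ?_⟩
  rw [toLin'_mul, toLin'_mul, toLin'_toMatrix']
  have hs' (y) : a.rangeRestrict (s y) = y := LinearMap.congr_fun hs y
  have hq' (y : LinearMap.range a) : q y = y := LinearMap.congr_fun hq y
  exact LinearMap.ext fun v => congrArg Subtype.val ((hs' _).trans (hq' (a.rangeRestrict v)))

theorem exists_eq_mul_add_mul_of_ker {A B : Matrix m n K}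
    (h : ∀ v, A *ᵥ v = 0 → ∃ w, B *ᵥ v = A *ᵥ w) :
    ∃ (X : Matrix n n K) (Y : Matrix m m K), B = A * X + Y * A := by
  obtain ⟨G, hG⟩ := exists_mul_mul_self_eq A
  have hAGA (v : n → K) : A *ᵥ (G *ᵥ (A *ᵥ v)) = A *ᵥ v := by
    rw [mulVec_mulVec, mulVec_mulVec, hG]
  -- `1 - G A` maps into `ker A`, and `1 - A G` kills `im A`.
  have hsandwich : (1 - A * G) * B * (1 - G * A) = 0 := by
    refine ext_iff_mulVec.mpr fun v => ?_
    obtain ⟨w, hw⟩ := h (v - G *ᵥ (A *ᵥ v)) (by rw [mulVec_sub, hAGA, sub_self])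
    calc ((1 - A * G) * B * (1 - G * A)) *ᵥ v
        = (1 - A * G) *ᵥ (B *ᵥ (v - G *ᵥ (A *ᵥ v))) := by
          simp only [← mulVec_mulVec, sub_mulVec, one_mulVec]
      _ = 0 *ᵥ v := by
          rw [hw, sub_mulVec, one_mulVec, ← mulVec_mulVec, hAGA, sub_self, zero_mulVec]
  refine ⟨G * B, B * G - A * G * B * G, ?_⟩
  rw [← sub_eq_zero, ← hsandwich]
  simp only [Matrix.sub_mul, Matrix.mul_sub, Matrix.one_mul, Matrix.mul_one, Matrix.mul_assoc]
  abel

end Field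

section DualNumber

theorem one_add_smul_mul_mul_one_add_smul {S m n : Type*} [CommRing S] [Fintype m] [Fintype n]
    [DecidableEq m] [DecidableEq n] {e : S} (he : e * e = 0)
    (A : Matrix m n S) (X : Matrix n n S) (Y : Matrix m m S) :
    (1 + e • Y) * A * (1 + e • X) = A + e • (A * X + Y * A) := by
  simp only [Matrix.add_mul, Matrix.mul_add, Matrix.one_mul, Matrix.mul_one, Matrix.smul_mul,
    Matrix.mul_smul, smul_add, smul_smul, he, zero_smul, add_zero]
  abel

theorem snd_det_map_add_eps_smul {R ι : Type*} [CommRing R] [Fintype ι] [DecidableEq ι]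
    (P Q : Matrix ι ι R) {j : ι} (hP : ∀ i, P i j = 0) :
    (P.map (algebraMap R R[ε]) + (ε : R[ε]) • Q.map (algebraMap R R[ε])).det.snd =
      (P.updateCol j fun i => Q i j).det := by
  set N := P.map (algebraMap R R[ε]) + (ε : R[ε]) • Q.map (algebraMap R R[ε])
  have hcol : N = N.updateCol j ((ε : R[ε]) • fun i => algebraMap R R[ε] (Q i j)) := by
    refine Matrix.ext fun i k => ?_
    rcases eq_or_ne k j with rfl | hk
    · simp [N, hP]
    · simp [N, hk]
  -- `snd (ε * x) = fst x`, and `fst` is a ring hom, so it commutes with `det`.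
  rw [hcol, det_updateCol_smul, DualNumber.snd_mul, DualNumber.fst_eps, DualNumber.snd_eps,
    zero_mul, zero_add, one_mul, ← fstHom_apply R, AlgHom.map_det]
  congr 1
  refine Matrix.ext fun i k => ?_
  rcases eq_or_ne k j with rfl | hk
  · simp
  · simp [N, hk, algebraMap_eq_inl]

variable {K : Type*} [Field K] {m n : Type*} [Fintype m] [Fintype n]

theorem minorsVanish_map_add_eps_smul_of_ker [DecidableEq m] [DecidableEq n] {A B : Matrix m n K}
    (h : ∀ v, A *ᵥ v = 0 → ∃ w, B *ᵥ v = A *ᵥ w) :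
    (A.map (algebraMap K K[ε]) + (ε : K[ε]) • B.map (algebraMap K K[ε])).MinorsVanish
      (Fin (A.rank + 1)) := by
  obtain ⟨X, Y, rfl⟩ := exists_eq_mul_add_mul_of_ker h
  have hA : (A.map (algebraMap K K[ε])).MinorsVanish (Fin (A.rank + 1)) :=
    (minorsVanish_of_rank_lt (by simp)).map _
  rw [Matrix.map_add _ (map_add _), Matrix.map_mul, Matrix.map_mul,
    ← one_add_smul_mul_mul_one_add_smul DualNumber.eps_mul_eps]
  exact (hA.mul_left _).mul_right _

theorem exists_mulVec_eq_of_minorsVanish {A B : Matrix m n K}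
    (h : (A.map (algebraMap K K[ε]) + (ε : K[ε]) • B.map (algebraMap K K[ε])).MinorsVanish
      (Fin (A.rank + 1))) {v : n → K} (hv : A *ᵥ v = 0) : ∃ w, B *ᵥ v = A *ᵥ w := by
  by_contra! hBv
  obtain ⟨u, hu, hspan⟩ := exists_linearIndependent_mulVec A
  let U : Matrix n (Fin (A.rank + 1)) K := of fun t j => (Fin.cons v u : Fin _ → n → K) j t
  let S : Matrix m (Fin (A.rank + 1)) K :=
    of fun i j => (Fin.cons (B *ᵥ v) (fun k => A *ᵥ u k) : Fin _ → m → K) j i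
  have hS : LinearIndependent K S.col := by
    refine linearIndependent_finCons.mpr ⟨hu, ?_⟩
    rw [hspan]
    rintro ⟨w, hw⟩
    exact hBv w hw.symm
  obtain ⟨f, hf⟩ := exists_det_submatrix_ne_zero hS
  have hMU := h.mul_right (U.map (algebraMap K K[ε])) f id
  rw [Matrix.add_mul, Matrix.smul_mul, ← Matrix.map_mul, ← Matrix.map_mul] at hMU
  have hsnd := snd_det_map_add_eps_smul ((A * U).submatrix f id) ((B * U).submatrix f id)
    (j := 0) (fun i => congrFun hv (f i))
  have hcols : ((A * U).submatrix f id).updateCol 0 (fun i => (B * U).submatrix f id i 0) =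
      S.submatrix f id := by
    ext i j
    refine Fin.cases ?_ (fun k => ?_) j <;> simp [U, S, mul_apply, mulVec, dotProduct]
  apply hf
  rw [← hcols, ← hsnd]
  exact congrArg snd hMU

theorem minorsVanish_map_add_eps_smul_iff [DecidableEq m] [DecidableEq n] (A B : Matrix m n K) :
    (A.map (algebraMap K K[ε]) + (ε : K[ε]) • B.map (algebraMap K K[ε])).MinorsVanish
        (Fin (A.rank + 1)) ↔ ∀ v, A *ᵥ v = 0 → ∃ w, B *ᵥ v = A *ᵥ w :=
  ⟨fun h _ => exists_mulVec_eq_of_minorsVanish h, minorsVanish_map_add_eps_smul_of_ker⟩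

end DualNumber

end Matrix

theorem minors_dualNumber_vanish_iff_general (n : ℕ)
    (A B : Matrix (Fin n) (Fin n) ℂ)
    (hrank : A.rank = 2) :
    (∀ f g : Fin 3 → Fin n,
        (((A.map (algebraMap ℂ (DualNumber ℂ)) +
            (DualNumber.eps : DualNumber ℂ) • B.map (algebraMap ℂ (DualNumber ℂ))).submatrix f g).det = 0))
      ↔ (∀ v : Fin n → ℂ, A.mulVec v = 0 → ∃ w : Fin n → ℂ, B.mulVec v = A.mulVec w) := by
  have h := minorsVanish_map_add_eps_smul_iff A B
  rw [hrank] at h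
  exact h

/-- Let `n ≥ 3`, `A, B` symmetric `n×n` complex matrices with `rank A = 2`,
and let `M = A' + ε•B'` over the dual numbers `ℂ[ε]/(ε²)`.  Then all `3×3` minors of `M`
vanish iff `B` maps the kernel of `A` into the image of `A`. -/
theorem minors_dualNumber_vanish_iff (n : ℕ) (hn : 3 ≤ n)
    (A B : Matrix (Fin n) (Fin n) ℂ)
    (hA : A.transpose = A) (hB : B.transpose = B) (hrank : A.rank = 2) :
    (∀ f g : Fin 3 → Fin n,
        (((A.map (algebraMap ℂ (DualNumber ℂ)) +
            (DualNumber.eps : DualNumber ℂ) • B.map (algebraMap ℂ (DualNumber ℂ))).submatrix f g).det = 0))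
      ↔ (∀ v : Fin n → ℂ, A.mulVec v = 0 → ∃ w : Fin n → ℂ, B.mulVec v = A.mulVec w) :=
  minors_dualNumber_vanish_iff_general n A B hrank
end

section
/- Let m be a natural number and work with matrices indexed by Fin 2 ⊕ Fin m over ℂ. Let A be the block matrix with blocks A₁₁ = I₂ (the 2×2 identity), A₁₂ = 0, A₂₁ = 0, A₂₂ = 0, and let B be a symmetric matrix (Bᵀ = B) with blocks B₁₁, B₁₂, B₂₁ = B₁₂ᵀ, B₂₂. Let ε denote the nilpotent generator of the dual numbers ℂ[ε]/(ε²) and let M = A' + ε•B' over ℂ[ε]/(ε²). Then all 3×3 minors of M vanish if and only if B₂₂ = 0, i.e. B (inr i) (inr j) = 0 for all i, j ∈ Fin m. -/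
/-!
If `B₂₂ = 0` then `B = X A + A Y` for block matrices `X`, `Y`, and since `ε² = 0` this gives
`A + ε B = (1 + ε X) A (1 + ε Y)`. As `A = fromBlocks 1 0 0 0` factors through `Fin 2`, so does
`A + ε B`, and every `3 × 3` minor of a matrix factoring through two dimensions vanishes.
Conversely, the minor on rows `inl 0, inl 1, inr i` and columns `inl 0, inl 1, inr j` is
`ε B (inr i) (inr j)`.
-/

open Matrix

namespace Matrix

variable {R : Type*} [CommRing R]

theorem det_mul_eq_zero_of_card_lt {n k : Type*} [Fintype n] [DecidableEq n] [Fintype k]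
    (L : Matrix n k R) (N : Matrix k n R) (h : Fintype.card k < Fintype.card n) :
    (L * N).det = 0 := by
  obtain ⟨d, hd⟩ := Nat.exists_eq_add_of_lt h
  -- pad the inner dimension up to that of `n` with a zero column block and a zero row block
  let e : n ≃ k ⊕ Fin (d + 1) :=
    Fintype.equivOfCardEq (by rw [Fintype.card_sum, Fintype.card_fin]; omega)
  have hpad : L * N = (fromCols L 0).submatrix id e * (fromRows N 0).submatrix e id := by
    rw [← submatrix_mul _ _ _ _ _ e.bijective, fromCols_mul_fromRows]
    simp
  rw [hpad, det_mul, det_eq_zero_of_column_eq_zero (e.symm (Sum.inr 0)) (by simp), zero_mul]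

theorem det_submatrix_mul_eq_zero_of_card_lt {ι n k : Type*} [Fintype n] [DecidableEq n]
    [Fintype k] (L : Matrix ι k R) (N : Matrix k ι R) (f g : n → ι)
    (h : Fintype.card k < Fintype.card n) : ((L * N).submatrix f g).det = 0 := by
  rw [submatrix_mul _ _ f id g Function.bijective_id]
  exact det_mul_eq_zero_of_card_lt _ _ h

theorem add_smul_mul_add_mul_eq_of_mul_self_eq_zero {ι : Type*} [Fintype ι] [DecidableEq ι]
    {e : R} (he : e * e = 0) (A X Y : Matrix ι ι R) :
    A + e • (X * A + A * Y) = (1 + e • X) * A * (1 + e • Y) := by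
  simp only [add_mul, mul_add, one_mul, mul_one, Matrix.smul_mul, Matrix.mul_smul, smul_smul, he,
    zero_smul, smul_add, add_zero]
  abel

theorem det_submatrix_fromBlocks_one_add_smul {m : Type*} {e : R}
    (he : e * e = 0) (B : Matrix (Fin 2 ⊕ m) (Fin 2 ⊕ m) R) (i j : m) :
    ((fromBlocks 1 0 0 0 + e • B).submatrix ![.inl 0, .inl 1, .inr i]
      ![.inl 0, .inl 1, .inr j]).det = e * B (.inr i) (.inr j) := by
  have he2 : e ^ 2 = 0 := by rw [sq, he]
  have he3 : e ^ 3 = 0 := by rw [pow_succ, he2, zero_mul]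
  rw [det_fin_three]
  simp only [Fin.isValue, submatrix_apply, cons_val_zero, add_apply, fromBlocks_apply₁₁,
    one_apply_eq, smul_apply, smul_eq_mul, cons_val_one, cons_val, fromBlocks_apply₂₂,
    zero_apply, zero_add, fromBlocks_apply₁₂, fromBlocks_apply₂₁, ne_eq, zero_ne_one,
    not_false_eq_true, one_apply_ne, one_ne_zero]
  -- every other term of the expansion carries `e ^ 2` or `e ^ 3`
  ring_nf
  simp only [he2, he3, zero_mul, add_zero, sub_zero]

variable {l m : Type*} [Fintype l] [DecidableEq l]

theorem fromBlocks_one_zero_zero_zero_eq_fromRows_mul_fromCols :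
    fromBlocks 1 0 0 0 = fromRows (1 : Matrix l l R) (0 : Matrix m l R) *
      fromCols (1 : Matrix l l R) (0 : Matrix l m R) := by
  rw [fromRows_mul_fromCols]
  simp

variable [Fintype m] [DecidableEq m]

theorem eq_mul_fromBlocks_one_add_fromBlocks_one_mul {B : Matrix (l ⊕ m) (l ⊕ m) R}
    (hB : B.toBlocks₂₂ = 0) :
    B = fromBlocks 0 0 B.toBlocks₂₁ 0 * fromBlocks 1 0 0 0 +
      fromBlocks 1 0 0 0 * fromBlocks B.toBlocks₁₁ B.toBlocks₁₂ 0 0 := by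
  conv_lhs => rw [← fromBlocks_toBlocks B, hB]
  simp [fromBlocks_multiply, fromBlocks_add]

theorem exists_fromBlocks_one_add_smul_eq_mul {e : R} (he : e * e = 0)
    {B : Matrix (l ⊕ m) (l ⊕ m) R} (hB : B.toBlocks₂₂ = 0) :
    ∃ (L : Matrix (l ⊕ m) l R) (N : Matrix l (l ⊕ m) R),
      (fromBlocks 1 0 0 0 + e • B : Matrix (l ⊕ m) (l ⊕ m) R) = L * N := by
  refine ⟨(1 + e • fromBlocks 0 0 B.toBlocks₂₁ 0 : Matrix (l ⊕ m) (l ⊕ m) R) *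
      fromRows 1 0,
    fromCols 1 0 *
      (1 + e • fromBlocks B.toBlocks₁₁ B.toBlocks₁₂ 0 0 : Matrix (l ⊕ m) (l ⊕ m) R),
    ?_⟩
  conv_lhs => rw [eq_mul_fromBlocks_one_add_fromBlocks_one_mul hB,
    add_smul_mul_add_mul_eq_of_mul_self_eq_zero he,
    fromBlocks_one_zero_zero_zero_eq_fromRows_mul_fromCols]
  simp only [Matrix.mul_assoc]
  exact (Matrix.mul_assoc _ _ _).symm

end Matrix

open DualNumber in
theorem minors_dualNumber_blocks_vanish_iff_general (m : ℕ)
    (B : Matrix (Fin 2 ⊕ Fin m) (Fin 2 ⊕ Fin m) ℂ) :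
    (∀ f g : Fin 3 → (Fin 2 ⊕ Fin m),
        ((((Matrix.fromBlocks (1 : Matrix (Fin 2) (Fin 2) ℂ) 0 0 0).map
              (algebraMap ℂ (DualNumber ℂ)) +
            (DualNumber.eps : DualNumber ℂ) • B.map (algebraMap ℂ (DualNumber ℂ))).submatrix
              f g).det = 0))
      ↔ (∀ i j : Fin m, B (Sum.inr i) (Sum.inr j) = 0) := by
  simp only [fromBlocks_map, Matrix.map_one _ (map_zero _) (map_one _),
    Matrix.map_zero _ (map_zero _)]
  constructor
  · intro h i j
    have hminor := h ![.inl 0, .inl 1, .inr i] ![.inl 0, .inl 1, .inr j]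
    rw [det_submatrix_fromBlocks_one_add_smul eps_mul_eps] at hminor
    simpa [TrivSqZeroExt.algebraMap_eq_inl] using congrArg TrivSqZeroExt.snd hminor
  · intro h f g
    have hB₂₂ : (B.map (algebraMap ℂ ℂ[ε])).toBlocks₂₂ = 0 :=
      Matrix.ext fun i j => by simp [toBlocks₂₂, h]
    obtain ⟨L, N, hLN⟩ := exists_fromBlocks_one_add_smul_eq_mul eps_mul_eps hB₂₂
    rw [hLN]
    exact det_submatrix_mul_eq_zero_of_card_lt L N f g (by simp)

/-- Over indices `Fin 2 ⊕ Fin m`, let `A = fromBlocks I₂ 0 0 0` and let `B`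
be symmetric.  With `M = A' + ε•B'` over the dual numbers `ℂ[ε]/(ε²)`, all `3×3` minors
of `M` vanish iff the lower-right block of `B` is zero, i.e. `B (inr i) (inr j) = 0`. -/
theorem minors_dualNumber_blocks_vanish_iff (m : ℕ)
    (B : Matrix (Fin 2 ⊕ Fin m) (Fin 2 ⊕ Fin m) ℂ) (hB : B.transpose = B) :
    (∀ f g : Fin 3 → (Fin 2 ⊕ Fin m),
        ((((Matrix.fromBlocks (1 : Matrix (Fin 2) (Fin 2) ℂ) 0 0 0).map
              (algebraMap ℂ (DualNumber ℂ)) +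
            (DualNumber.eps : DualNumber ℂ) • B.map (algebraMap ℂ (DualNumber ℂ))).submatrix
              f g).det = 0))
      ↔ (∀ i j : Fin m, B (Sum.inr i) (Sum.inr j) = 0) :=
  minors_dualNumber_blocks_vanish_iff_general m B
end

section
/- Let n be a natural number and let A be a symmetric n×n complex matrix (Aᵀ = A). Then rank A ≤ 2 if and only if there exist vectors v, w ∈ ℂⁿ with A = v·vᵀ + w·wᵀ, i.e. A = Matrix.vecMulVec v v + Matrix.vecMulVec w w. -/
open Matrix

private lemma vmv_mulVec {n : ℕ} (v w x : Fin n → ℂ) :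
    Matrix.vecMulVec v w *ᵥ x = (w ⬝ᵥ x) • v := by
  ext i
  simp [Matrix.mulVec, Matrix.vecMulVec_apply, dotProduct, Finset.mul_sum, mul_comm,
    mul_left_comm]

private lemma vmv_transpose {n : ℕ} (v : Fin n → ℂ) :
    (Matrix.vecMulVec v v)ᵀ = Matrix.vecMulVec v v := by
  ext i j
  simp [Matrix.vecMulVec_apply, mul_comm]

private lemma rank_vmv_le {n : ℕ} (v w : Fin n → ℂ) :
    (Matrix.vecMulVec v w).rank ≤ 1 := by
  rw [Matrix.vecMulVec_eq Unit]
  refine (Matrix.rank_mul_le_left _ _).trans ?_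
  exact (Matrix.rank_le_card_width _).trans (by simp)

private lemma rank_add_le' {n : ℕ} (X Y : Matrix (Fin n) (Fin n) ℂ) :
    (X + Y).rank ≤ X.rank + Y.rank := by
  have h : LinearMap.range (X + Y).mulVecLin ≤
      LinearMap.range X.mulVecLin ⊔ LinearMap.range Y.mulVecLin := by
    rintro _ ⟨x, rfl⟩
    have : (X + Y).mulVecLin x = X.mulVecLin x + Y.mulVecLin x := by
      simp [Matrix.mulVecLin_apply, Matrix.add_mulVec]
    rw [this]
    exact Submodule.add_mem_sup ⟨x, rfl⟩ ⟨x, rfl⟩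
  calc (X + Y).rank ≤ Module.finrank ℂ
        (LinearMap.range X.mulVecLin ⊔ LinearMap.range Y.mulVecLin : Submodule ℂ (Fin n → ℂ)) :=
        Submodule.finrank_mono h
    _ ≤ X.rank + Y.rank := Submodule.finrank_add_le_finrank_add_finrank _ _

private lemma eq_zero_of_rank_eq_zero {n : ℕ} (C : Matrix (Fin n) (Fin n) ℂ)
    (h : C.rank = 0) : C = 0 := by
  have hr : LinearMap.range C.mulVecLin = ⊥ := Submodule.finrank_eq_zero.mp h
  have hz : ∀ x, C *ᵥ x = 0 := by
    intro x
    have : C.mulVecLin x ∈ LinearMap.range C.mulVecLin := ⟨x, rfl⟩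
    rw [hr] at this
    simpa [Matrix.mulVecLin_apply] using this
  ext i j
  have := congrFun (hz (Pi.single j 1)) i
  simpa [Matrix.mulVec_single] using this

/-- Key step: a nonzero symmetric complex matrix can have a symmetric rank-one
piece split off, decreasing the rank. -/
private lemma step {n : ℕ} (A : Matrix (Fin n) (Fin n) ℂ) (hA : Aᵀ = A) (hne : A ≠ 0) :
    ∃ v : Fin n → ℂ, (A - Matrix.vecMulVec v v)ᵀ = A - Matrix.vecMulVec v v ∧
      (A - Matrix.vecMulVec v v).rank + 1 ≤ A.rank := by
  -- symmetry of the bilinear form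
  have hsymm : ∀ x y : Fin n → ℂ, x ⬝ᵥ (A *ᵥ y) = y ⬝ᵥ (A *ᵥ x) := by
    intro x y
    calc x ⬝ᵥ (A *ᵥ y) = (x ᵥ* A) ⬝ᵥ y := Matrix.dotProduct_mulVec _ _ _
      _ = (Aᵀ *ᵥ x) ⬝ᵥ y := by rw [Matrix.mulVec_transpose]
      _ = (A *ᵥ x) ⬝ᵥ y := by rw [hA]
      _ = y ⬝ᵥ (A *ᵥ x) := dotProduct_comm _ _
  -- find a vector with nonzero quadratic form
  have key : ∃ u : Fin n → ℂ, u ⬝ᵥ (A *ᵥ u) ≠ 0 := by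
    by_contra h
    push_neg at h
    apply hne
    have h4 : ∀ x y : Fin n → ℂ, x ⬝ᵥ (A *ᵥ y) = 0 := by
      intro x y
      have hxy := h (x + y)
      have hx := h x
      have hy := h y
      rw [Matrix.mulVec_add, dotProduct_add, add_dotProduct,
        add_dotProduct] at hxy
      rw [hsymm y x] at hxy
      have : (2 : ℂ) * (x ⬝ᵥ (A *ᵥ y)) = 0 := by
        rw [hx, hy] at hxy
        ring_nf
        ring_nf at hxy
        linear_combination hxy
      have h2 : (2 : ℂ) ≠ 0 := two_ne_zero
      exact (mul_eq_zero.mp this).resolve_left h2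
    ext i j
    have := h4 (Pi.single i 1) (Pi.single j 1)
    simpa [Matrix.mulVec_single, single_dotProduct] using this
  obtain ⟨u, hu⟩ := key
  obtain ⟨s, hs⟩ := IsAlgClosed.exists_pow_nat_eq (u ⬝ᵥ (A *ᵥ u)) (n := 2) two_pos
  have hs0 : s ≠ 0 := by
    intro h; rw [h] at hs; simp at hs; exact hu hs.symm
  set v : Fin n → ℂ := s⁻¹ • (A *ᵥ u) with hv
  have hdot : ∀ x : Fin n → ℂ, v ⬝ᵥ x = s⁻¹ * (u ⬝ᵥ (A *ᵥ x)) := by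
    intro x
    rw [hv, smul_dotProduct, smul_eq_mul]
    congr 1
    calc (A *ᵥ u) ⬝ᵥ x = x ⬝ᵥ (A *ᵥ u) := dotProduct_comm _ _
      _ = u ⬝ᵥ (A *ᵥ x) := hsymm x u
  refine ⟨v, ?_, ?_⟩
  · rw [Matrix.transpose_sub, hA, vmv_transpose]
  · set B := A - Matrix.vecMulVec v v with hB
    have hBx : ∀ x, B *ᵥ x = A *ᵥ x - (v ⬝ᵥ x) • v := by
      intro x
      rw [hB, Matrix.sub_mulVec, vmv_mulVec]
    -- kernel inclusion
    have hker : ∀ x, A *ᵥ x = 0 → B *ᵥ x = 0 := by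
      intro x hx
      rw [hBx, hx, hdot, hx]
      simp
    have hBu : B *ᵥ u = 0 := by
      rw [hBx, hdot, hs.symm]
      rw [hv]
      rw [smul_smul]
      have : s⁻¹ * s ^ 2 * s⁻¹ = 1 := by
        field_simp
      rw [this, one_smul, sub_self]
    have hAu : ¬ A *ᵥ u = 0 := by
      intro h
      apply hu
      rw [h]
      simp
    have hlt : LinearMap.ker A.mulVecLin < LinearMap.ker B.mulVecLin := by
      rw [SetLike.lt_iff_le_and_exists]
      constructor
      · intro x hx
        rw [LinearMap.mem_ker, Matrix.mulVecLin_apply] at hx ⊢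
        exact hker x hx
      · exact ⟨u, by rw [LinearMap.mem_ker, Matrix.mulVecLin_apply]; exact hBu,
          by rw [LinearMap.mem_ker, Matrix.mulVecLin_apply]; exact hAu⟩
    have hfin : Module.finrank ℂ (LinearMap.ker A.mulVecLin) <
        Module.finrank ℂ (LinearMap.ker B.mulVecLin) :=
      Submodule.finrank_lt_finrank_of_lt hlt
    have h1 := LinearMap.finrank_range_add_finrank_ker A.mulVecLin
    have h2 := LinearMap.finrank_range_add_finrank_ker B.mulVecLin
    have hrA : A.rank = Module.finrank ℂ (LinearMap.range A.mulVecLin) := rfl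
    have hrB : B.rank = Module.finrank ℂ (LinearMap.range B.mulVecLin) := rfl
    rw [← hrA] at h1
    rw [← hrB] at h2
    omega

/-- A symmetric `n×n` complex matrix has rank at most `2` iff it is a sum of
two symmetric rank-one matrices: `A = v·vᵀ + w·wᵀ`. -/
theorem symm_rank_le_two_iff_sum_two_squares (n : ℕ)
    (A : Matrix (Fin n) (Fin n) ℂ) (hA : A.transpose = A) :
    A.rank ≤ 2 ↔
      ∃ v w : Fin n → ℂ, A = Matrix.vecMulVec v v + Matrix.vecMulVec w w := by
  constructor
  · intro hrk
    by_cases h0 : A = 0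
    · refine ⟨0, 0, ?_⟩
      rw [h0]
      ext i j
      simp [Matrix.vecMulVec_apply]
    · obtain ⟨v, hsymm1, hr1⟩ := step A hA h0
      set B := A - Matrix.vecMulVec v v with hB
      have hrkB : B.rank ≤ 1 := by omega
      by_cases hB0 : B = 0
      · refine ⟨v, 0, ?_⟩
        have : A = Matrix.vecMulVec v v := by
          have := sub_eq_zero.mp (hB ▸ hB0)
          exact this
        rw [this]
        ext i j
        simp [Matrix.vecMulVec_apply]
      · obtain ⟨w, _, hr2⟩ := step B hsymm1 hB0
        have hC0 : (B - Matrix.vecMulVec w w).rank = 0 := by omega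
        have hC : B - Matrix.vecMulVec w w = 0 := eq_zero_of_rank_eq_zero _ hC0
        refine ⟨v, w, ?_⟩
        have hBw : B = Matrix.vecMulVec w w := sub_eq_zero.mp hC
        have hAv : A = Matrix.vecMulVec v v + B := by
          rw [hB]; abel
        rw [hAv, hBw]
  · rintro ⟨v, w, rfl⟩
    refine (rank_add_le' _ _).trans ?_
    have h1 := rank_vmv_le v v
    have h2 := rank_vmv_le w w
    omega
end

section
/- Let n ≥ 1, let x ∈ ℂⁿ be nonzero and let y ∈ ℂⁿ be nonzero. Consider the ℂ-subspace W of n×n complex matrices defined by W = {A : Aᵀ = A and A·x ∈ span_ℂ{y}} (where A·x = Matrix.mulVec A x). Then W is a linear subspace of the space of symmetric matrices of dimension finrank_ℂ W = n(n+1)/2 − (n−1). -/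
open Matrix

/-!
The matrices in question are the kernel of the linear map `A ↦ A x mod ℂ y` from symmetric
matrices to `ℂⁿ / ℂ y`, a space of dimension `n - 1`. This map is onto because any vector `v` is
`A x` for a symmetric `A`: if `φ ⬝ᵥ x = 1`, take `A = v φᵀ + φ vᵀ - (v ⬝ᵥ x) φ φᵀ`.
Rank–nullity, with `n (n + 1) / 2` the dimension of the symmetric matrices, gives the count.
-/

namespace Matrix

section Symmetric

variable (R ι : Type*) [Semiring R]

def symmetricMatrices : Submodule R (Matrix ι ι R) where
  carrier := {A | A.IsSymm}
  add_mem' := IsSymm.add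
  zero_mem' := isSymm_zero
  smul_mem' c _ hA := hA.smul c

variable {R ι}

theorem mem_symmetricMatrices {A : Matrix ι ι R} : A ∈ symmetricMatrices R ι ↔ A.IsSymm :=
  Iff.rfl

variable (R ι) in
def sym2EquivSymmetricMatrices : (Sym2 ι → R) ≃ₗ[R] symmetricMatrices R ι where
  toFun f := ⟨of fun i j => f s(i, j), IsSymm.ext fun _ _ => congrArg f Sym2.eq_swap⟩
  invFun A := Sym2.lift ⟨fun i j => A.1 i j, fun i j => A.2.apply j i⟩
  left_inv _ := funext <| Sym2.ind fun _ _ => rfl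
  right_inv _ := rfl
  map_add' _ _ := rfl
  map_smul' _ _ := rfl

theorem finrank_symmetricMatrices (R ι : Type*) [CommRing R] [StrongRankCondition R]
    [Fintype ι] :
    Module.finrank R (symmetricMatrices R ι) = Fintype.card ι * (Fintype.card ι + 1) / 2 := by
  rw [← (sym2EquivSymmetricMatrices R ι).finrank_eq, Module.finrank_fintype_fun_eq_card,
    Sym2.card, Nat.choose_two_right, Nat.add_sub_cancel, Nat.mul_comm]

end Symmetric

variable {K ι : Type*} [Field K] [Fintype ι]

theorem exists_isSymm_mulVec_eq {x : ι → K} (hx : x ≠ 0) (v : ι → K) :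
    ∃ A : Matrix ι ι K, A.IsSymm ∧ A *ᵥ x = v := by
  classical
  obtain ⟨i, hi⟩ := Function.ne_iff.1 hx
  set φ : ι → K := Pi.single i (x i)⁻¹
  have hφ : φ ⬝ᵥ x = 1 := by simp [φ, single_dotProduct, inv_mul_cancel₀ hi]
  refine ⟨vecMulVec v φ + (vecMulVec v φ)ᵀ - (v ⬝ᵥ x) • vecMulVec φ φ, ?_, ?_⟩
  · have hφφ : (vecMulVec φ φ).IsSymm := transpose_vecMulVec φ φ
    exact (isSymm_add_transpose_self (vecMulVec v φ)).sub (hφφ.smul (v ⬝ᵥ x))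
  · simp [add_mulVec, sub_mulVec, smul_mulVec, vecMulVec_mulVec, hφ]

variable (x y : ι → K)

def mulVecModSpan : symmetricMatrices K ι →ₗ[K] (ι → K) ⧸ K ∙ y :=
  (K ∙ y).mkQ ∘ₗ (mulVecBilin K K).flip x ∘ₗ (symmetricMatrices K ι).subtype

variable {x y}

theorem mem_ker_mulVecModSpan {A : symmetricMatrices K ι} :
    A ∈ LinearMap.ker (mulVecModSpan x y) ↔ (A : Matrix ι ι K) *ᵥ x ∈ K ∙ y := by
  simp [mulVecModSpan, Submodule.Quotient.mk_eq_zero]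

theorem mulVecModSpan_surjective (hx : x ≠ 0) : Function.Surjective (mulVecModSpan x y) := by
  intro q
  obtain ⟨v, rfl⟩ := (K ∙ y).mkQ_surjective q
  obtain ⟨A, hA, rfl⟩ := exists_isSymm_mulVec_eq hx v
  exact ⟨⟨A, hA⟩, rfl⟩

theorem finrank_ker_mulVecModSpan (hx : x ≠ 0) (hy : y ≠ 0) :
    Module.finrank K (LinearMap.ker (mulVecModSpan x y)) =
      Fintype.card ι * (Fintype.card ι + 1) / 2 - (Fintype.card ι - 1) := by
  have rank_nullity := (mulVecModSpan x y).finrank_range_add_finrank_ker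
  have finrank_quotient := (K ∙ y).finrank_quotient_add_finrank
  rw [LinearMap.range_eq_top.2 (mulVecModSpan_surjective hx), finrank_top,
    finrank_symmetricMatrices] at rank_nullity
  rw [finrank_span_singleton hy, Module.finrank_fintype_fun_eq_card] at finrank_quotient
  omega

end Matrix

theorem dim_symm_matrices_mulVec_in_line_general (n : ℕ)
    (x y : Fin n → ℂ) (hx : x ≠ 0) (hy : y ≠ 0)
    (W : Submodule ℂ (Matrix (Fin n) (Fin n) ℂ))
    (hW : ∀ A : Matrix (Fin n) (Fin n) ℂ,
      A ∈ W ↔ (A.transpose = A ∧ A.mulVec x ∈ Submodule.span ℂ {y})) :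
    Module.finrank ℂ W = n * (n + 1) / 2 - (n - 1) := by
  have hW_eq :
      W = (LinearMap.ker (mulVecModSpan x y)).map (symmetricMatrices ℂ (Fin n)).subtype := by
    ext A
    simp only [hW, Submodule.mem_map, mem_ker_mulVecModSpan, Submodule.coe_subtype, Subtype.exists,
      exists_and_right, exists_eq_right, exists_prop, mem_symmetricMatrices, IsSymm]
  rw [hW_eq, Submodule.finrank_map_subtype_eq, finrank_ker_mulVecModSpan hx hy, Fintype.card_fin]

/-- For nonzero `x, y ∈ ℂⁿ` (`n ≥ 1`), the subspace
`W = {A : Aᵀ = A ∧ A·x ∈ span{y}}` of `n×n` complex matrices has dimension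
`n(n+1)/2 − (n−1)`. -/
theorem dim_symm_matrices_mulVec_in_line (n : ℕ) (hn : 1 ≤ n)
    (x y : Fin n → ℂ) (hx : x ≠ 0) (hy : y ≠ 0)
    (W : Submodule ℂ (Matrix (Fin n) (Fin n) ℂ))
    (hW : ∀ A : Matrix (Fin n) (Fin n) ℂ,
      A ∈ W ↔ (A.transpose = A ∧ A.mulVec x ∈ Submodule.span ℂ {y})) :
    Module.finrank ℂ W = n * (n + 1) / 2 - (n - 1) :=
  dim_symm_matrices_mulVec_in_line_general n x y hx hy W hW
end
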